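/- Let S : ℂ → Matrix (Fin N) (Fin N) ℂ be twice continuously real-differentiable with S(z) invertible for every z. Define A_{z̄} := −i·S⁻¹·∂_{z̄}S, A_z := (A_{z̄})ᴴ = i·∂_z(Sᴴ)·(Sᴴ)⁻¹, the real gauge-field components A₁ := A_z + A_{z̄} and A₂ := i·(A_z − A_{z̄}), the field strength F₁₂ := ∂₁A₂ − ∂₂A₁ + i·[A₁, A₂] (where ∂₁, ∂₂ are the real partial derivatives in the directions 1 and i of ℂ ≅ ℝ²), and the gauge-invariant Ω := S·Sᴴ. Then pointwise F₁₂ = −2·S⁻¹·∂_{z̄}((∂_zΩ)·Ω⁻¹)·S. -/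

import Mathlib

open Matrix Complex

attribute [local instance] Matrix.frobeniusNormedAddCommGroup Matrix.frobeniusNormedSpace

/-- The real partial derivative in the direction `1` of `ℂ ≅ ℝ²`. -/
noncomputable def d1 {E : Type*} [NormedAddCommGroup E] [NormedSpace ℂ E]
    (f : ℂ → E) (w : ℂ) : E := fderiv ℝ f w 1

/-- The real partial derivative in the direction `i` of `ℂ ≅ ℝ²`. -/
noncomputable def d2 {E : Type*} [NormedAddCommGroup E] [NormedSpace ℂ E]
    (f : ℂ → E) (w : ℂ) : E := fderiv ℝ f w Complex.I

/-- The Wirtinger derivative `∂_z f (w) = (1/2)(Df(w)[1] − i·Df(w)[i])`. -/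
noncomputable def dz {E : Type*} [NormedAddCommGroup E] [NormedSpace ℂ E]
    (f : ℂ → E) (w : ℂ) : E :=
  (2 : ℂ)⁻¹ • (d1 f w - Complex.I • d2 f w)

/-- The Wirtinger derivative `∂_{z̄} f (w) = (1/2)(Df(w)[1] + i·Df(w)[i])`. -/
noncomputable def dzbar {E : Type*} [NormedAddCommGroup E] [NormedSpace ℂ E]
    (f : ℂ → E) (w : ℂ) : E :=
  (2 : ℂ)⁻¹ • (d1 f w + Complex.I • d2 f w)

/-!
Write `Q = S⁻¹ ∂_{z̄} S` and `P = S⁻¹ ∂_z S`, so that `A_{z̄} = -i Q` and `A_z = i Qᴴ`.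
In complex coordinates `F₁₂ = 2i (∂_{z̄} A_z - ∂_z A_{z̄}) + 2 [A_z, A_{z̄}]
= -2 (∂_z Q + (∂_z Q)ᴴ + [Q, Qᴴ])`. On the other side `∂_z Ω · Ω⁻¹ = S (P + Qᴴ) S⁻¹`, and
`S⁻¹ ∂_{z̄}(S B S⁻¹) S = ∂_{z̄} B + [Q, B]` for any `B`. The two sides agree by the
Maurer–Cartan equation `∂_{z̄} P - ∂_z Q = [P, Q]` of the flat connection `S⁻¹ dS`, which is
where the symmetry of the second derivative of `S` enters.
-/

section Wirtinger

variable {E : Type*} [NormedAddCommGroup E] [NormedSpace ℂ E] {f g : ℂ → E} {z : ℂ}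

theorem d1_eq_dz_add_dzbar (f : ℂ → E) (z : ℂ) : d1 f z = dz f z + dzbar f z := by
  simp only [dz, dzbar]
  module

theorem d2_eq_I_smul_dz_sub_dzbar (f : ℂ → E) (z : ℂ) : d2 f z = I • (dz f z - dzbar f z) := by
  simp only [dz, dzbar]
  linear_combination (norm := module) I_mul_I • d2 f z

theorem dz_const_smul (hf : DifferentiableAt ℝ f z) (c : ℂ) :
    dz (fun w => c • f w) z = c • dz f z := by
  simp only [dz, d1, d2, fderiv_fun_const_smul hf c, _root_.smul_apply]
  module

theorem dzbar_const_smul (hf : DifferentiableAt ℝ f z) (c : ℂ) :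
    dzbar (fun w => c • f w) z = c • dzbar f z := by
  simp only [dzbar, d1, d2, fderiv_fun_const_smul hf c, _root_.smul_apply]
  module

theorem dzbar_add (hf : DifferentiableAt ℝ f z) (hg : DifferentiableAt ℝ g z) :
    dzbar (fun w => f w + g w) z = dzbar f z + dzbar g z := by
  simp only [dzbar, d1, d2, fderiv_fun_add hf hg, _root_.add_apply]
  module

theorem ContDiffAt.differentiableAt_fderiv_apply (hf : ContDiffAt ℝ 2 f z) (v : ℂ) :
    DifferentiableAt ℝ (fun w => fderiv ℝ f w v) z :=
  ((hf.fderiv_right (m := 1) le_rfl).differentiableAt one_ne_zero).clm_apply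
    (differentiableAt_const v)

theorem ContDiffAt.differentiableAt_dz (hf : ContDiffAt ℝ 2 f z) : DifferentiableAt ℝ (dz f) z :=
  ((hf.differentiableAt_fderiv_apply 1).sub
    ((hf.differentiableAt_fderiv_apply I).const_smul I)).const_smul _

theorem ContDiffAt.differentiableAt_dzbar (hf : ContDiffAt ℝ 2 f z) :
    DifferentiableAt ℝ (dzbar f) z :=
  ((hf.differentiableAt_fderiv_apply 1).add
    ((hf.differentiableAt_fderiv_apply I).const_smul I)).const_smul _

theorem ContDiffAt.fderiv_fderiv_apply (hf : ContDiffAt ℝ 2 f z) (u v : ℂ) :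
    fderiv ℝ (fun w => fderiv ℝ f w v) z u = fderiv ℝ (fderiv ℝ f) z u v := by
  rw [fderiv_clm_apply ((hf.fderiv_right (m := 1) le_rfl).differentiableAt one_ne_zero)
    (differentiableAt_const v)]
  simp

theorem ContDiffAt.fderiv_dz_apply (hf : ContDiffAt ℝ 2 f z) (u : ℂ) :
    fderiv ℝ (dz f) z u
      = (2 : ℂ)⁻¹ • (fderiv ℝ (fderiv ℝ f) z u 1 - I • fderiv ℝ (fderiv ℝ f) z u I) := by
  change fderiv ℝ (fun w => (2 : ℂ)⁻¹ • (fderiv ℝ f w 1 - I • fderiv ℝ f w I)) z u = _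
  have h1 := hf.differentiableAt_fderiv_apply 1
  have hI := hf.differentiableAt_fderiv_apply I
  rw [fderiv_fun_const_smul (h1.fun_sub (hI.fun_const_smul I)),
    fderiv_fun_sub h1 (hI.fun_const_smul I), fderiv_fun_const_smul hI]
  simp only [_root_.smul_apply, _root_.sub_apply, hf.fderiv_fderiv_apply]

theorem ContDiffAt.fderiv_dzbar_apply (hf : ContDiffAt ℝ 2 f z) (u : ℂ) :
    fderiv ℝ (dzbar f) z u
      = (2 : ℂ)⁻¹ • (fderiv ℝ (fderiv ℝ f) z u 1 + I • fderiv ℝ (fderiv ℝ f) z u I) := by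
  change fderiv ℝ (fun w => (2 : ℂ)⁻¹ • (fderiv ℝ f w 1 + I • fderiv ℝ f w I)) z u = _
  have h1 := hf.differentiableAt_fderiv_apply 1
  have hI := hf.differentiableAt_fderiv_apply I
  rw [fderiv_fun_const_smul (h1.fun_add (hI.fun_const_smul I)),
    fderiv_fun_add h1 (hI.fun_const_smul I), fderiv_fun_const_smul hI]
  simp only [_root_.smul_apply, _root_.add_apply, hf.fderiv_fderiv_apply]

theorem ContDiffAt.dz_dzbar_comm (hf : ContDiffAt ℝ 2 f z) : dz (dzbar f) z = dzbar (dz f) z := by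
  have hsymm := (hf.isSymmSndFDerivAt (by simp)).eq I 1
  simp only [dz, dzbar, d1, d2, hf.fderiv_dz_apply, hf.fderiv_dzbar_apply, hsymm]
  module

end Wirtinger

open scoped Ring

section Algebra

variable {A : Type*} [NormedRing A] [NormedAlgebra ℂ A] {f g : ℂ → A} {z : ℂ}

theorem fderiv_mul_apply (hf : DifferentiableAt ℝ f z) (hg : DifferentiableAt ℝ g z) (v : ℂ) :
    fderiv ℝ (fun w => f w * g w) z v = fderiv ℝ f z v * g z + f z * fderiv ℝ g z v := by
  rw [fderiv_fun_mul' hf hg]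
  simp [add_comm]

theorem dz_mul (hf : DifferentiableAt ℝ f z) (hg : DifferentiableAt ℝ g z) :
    dz (fun w => f w * g w) z = dz f z * g z + f z * dz g z := by
  simp only [dz, d1, d2, fderiv_mul_apply hf hg, mul_sub, sub_mul, smul_mul_assoc, mul_smul_comm]
  module

theorem dzbar_mul (hf : DifferentiableAt ℝ f z) (hg : DifferentiableAt ℝ g z) :
    dzbar (fun w => f w * g w) z = dzbar f z * g z + f z * dzbar g z := by
  simp only [dzbar, d1, d2, fderiv_mul_apply hf hg, mul_add, add_mul, smul_mul_assoc,
    mul_smul_comm]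
  module

theorem fieldStrength_eq_wirtinger {a b A₁ A₂ : ℂ → A} (ha : DifferentiableAt ℝ a z)
    (hb : DifferentiableAt ℝ b z) (hA₁ : ∀ w, A₁ w = a w + b w)
    (hA₂ : ∀ w, A₂ w = I • (a w - b w)) :
    d1 A₂ z - d2 A₁ z + I • (A₁ z * A₂ z - A₂ z * A₁ z)
      = (2 * I) • (dzbar a z - dz b z) + (2 : ℂ) • (a z * b z - b z * a z) := by
  obtain rfl : A₁ = fun w => a w + b w := funext hA₁
  obtain rfl : A₂ = fun w => I • (a w - b w) := funext hA₂
  have hd1 : d1 (fun w => I • (a w - b w)) z = I • (d1 a z - d1 b z) := by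
    simp only [d1, fderiv_fun_const_smul (ha.fun_sub hb), fderiv_fun_sub ha hb, _root_.smul_apply,
      _root_.sub_apply]
  have hd2 : d2 (fun w => a w + b w) z = d2 a z + d2 b z := by
    simp only [d2, fderiv_fun_add ha hb, _root_.add_apply]
  rw [hd1, hd2, d1_eq_dz_add_dzbar a, d1_eq_dz_add_dzbar b, d2_eq_I_smul_dz_sub_dzbar a,
    d2_eq_I_smul_dz_sub_dzbar b]
  simp only [mul_add, add_mul, mul_sub, sub_mul, smul_mul_assoc, mul_smul_comm, smul_sub,
    smul_add, smul_smul, I_mul_I]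
  module

variable [CompleteSpace A]

theorem fderiv_ringInverse_apply (hf : DifferentiableAt ℝ f z) (hu : IsUnit (f z)) (v : ℂ) :
    fderiv ℝ (fun w => (f w)⁻¹ʳ) z v = -((f z)⁻¹ʳ * fderiv ℝ f z v * (f z)⁻¹ʳ) := by
  obtain ⟨u, hu⟩ := hu
  rw [fderiv_fun_comp z (differentiableAt_inverse ⟨u, hu⟩) hf, ← hu, fderiv_inverse]
  simp

theorem dz_ringInverse (hf : DifferentiableAt ℝ f z) (hu : IsUnit (f z)) :
    dz (fun w => (f w)⁻¹ʳ) z = -((f z)⁻¹ʳ * dz f z * (f z)⁻¹ʳ) := by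
  simp only [dz, d1, d2, fderiv_ringInverse_apply hf hu, mul_sub, sub_mul, smul_mul_assoc,
    mul_smul_comm]
  module

theorem dzbar_ringInverse (hf : DifferentiableAt ℝ f z) (hu : IsUnit (f z)) :
    dzbar (fun w => (f w)⁻¹ʳ) z = -((f z)⁻¹ʳ * dzbar f z * (f z)⁻¹ʳ) := by
  simp only [dzbar, d1, d2, fderiv_ringInverse_apply hf hu, mul_add, add_mul, smul_mul_assoc,
    mul_smul_comm]
  module

theorem ContDiffAt.differentiableAt_ringInverse_mul_dzbar (hf : ContDiffAt ℝ 2 f z)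
    (hu : IsUnit (f z)) : DifferentiableAt ℝ (fun w => (f w)⁻¹ʳ * dzbar f w) z :=
  ((hf.differentiableAt two_ne_zero).inverse hu).mul hf.differentiableAt_dzbar

theorem ContDiffAt.wirtinger_maurerCartan (hf : ContDiffAt ℝ 2 f z) (hu : IsUnit (f z)) :
    dzbar (fun w => (f w)⁻¹ʳ * dz f w) z - dz (fun w => (f w)⁻¹ʳ * dzbar f w) z
      = (f z)⁻¹ʳ * dz f z * ((f z)⁻¹ʳ * dzbar f z)
        - (f z)⁻¹ʳ * dzbar f z * ((f z)⁻¹ʳ * dz f z) := by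
  have hdf := hf.differentiableAt two_ne_zero
  rw [dzbar_mul (hdf.inverse hu) hf.differentiableAt_dz, dz_mul (hdf.inverse hu)
    hf.differentiableAt_dzbar, dzbar_ringInverse hdf hu, dz_ringInverse hdf hu, hf.dz_dzbar_comm]
  noncomm_ring

theorem dzbar_conj {B : ℂ → A} (hf : DifferentiableAt ℝ f z) (hu : IsUnit (f z))
    (hB : DifferentiableAt ℝ B z) :
    (f z)⁻¹ʳ * dzbar (fun w => f w * B w * (f w)⁻¹ʳ) z * f z
      = dzbar B z + ((f z)⁻¹ʳ * dzbar f z * B z - B z * ((f z)⁻¹ʳ * dzbar f z)) := by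
  rw [dzbar_mul (hf.fun_mul hB) (hf.inverse hu), dzbar_mul hf hB, dzbar_ringInverse hf hu]
  simp only [add_mul, mul_add, mul_neg, neg_mul, mul_assoc, Ring.inverse_mul_cancel_left _ _ hu,
    Ring.inverse_mul_cancel _ hu, mul_one]
  abel

end Algebra

section ConjTranspose

variable {n : Type*} [Fintype n]

theorem d1_conjTranspose (f : ℂ → Matrix n n ℂ) (z : ℂ) :
    d1 (fun w => (f w)ᴴ) z = (d1 f z)ᴴ :=
  DFunLike.congr_fun ((starL' ℝ).comp_fderiv (f := f) (x := z)) 1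

theorem d2_conjTranspose (f : ℂ → Matrix n n ℂ) (z : ℂ) :
    d2 (fun w => (f w)ᴴ) z = (d2 f z)ᴴ :=
  DFunLike.congr_fun ((starL' ℝ).comp_fderiv (f := f) (x := z)) I

theorem dz_conjTranspose (f : ℂ → Matrix n n ℂ) (z : ℂ) :
    dz (fun w => (f w)ᴴ) z = (dzbar f z)ᴴ := by
  simp [dz, dzbar, d1_conjTranspose, d2_conjTranspose, conjTranspose_smul, sub_eq_add_neg]

theorem dzbar_conjTranspose (f : ℂ → Matrix n n ℂ) (z : ℂ) :
    dzbar (fun w => (f w)ᴴ) z = (dz f z)ᴴ := by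
  simp [dz, dzbar, d1_conjTranspose, d2_conjTranspose, conjTranspose_smul, smul_add]

end ConjTranspose

attribute [local instance] Matrix.frobeniusNormedRing Matrix.frobeniusNormedAlgebra

theorem dz_mul_conjTranspose_mul_ringInverse {n : Type*} [Fintype n] [DecidableEq n]
    {S : ℂ → Matrix n n ℂ} {z : ℂ} (hS : DifferentiableAt ℝ S z) (hu : IsUnit (S z)) :
    dz (fun w => S w * (S w)ᴴ) z * (S z * (S z)ᴴ)⁻¹ʳ
      = S z * ((S z)⁻¹ʳ * dz S z + ((S z)⁻¹ʳ * dzbar S z)ᴴ) * (S z)⁻¹ʳ := by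
  have hSH : DifferentiableAt ℝ (fun w => (S w)ᴴ) z := hS.star
  rw [dz_mul hS hSH, dz_conjTranspose, Ring.inverse_mul (Or.inl hu)]
  have hinv : ((S z)⁻¹ʳ)ᴴ = ((S z)ᴴ)⁻¹ʳ := (Ring.inverse_star (S z)).symm
  rw [conjTranspose_mul, hinv]
  simp only [add_mul, mul_add, mul_assoc, Ring.mul_inverse_cancel_left _ _ hu,
    Ring.mul_inverse_cancel_left _ _ ((isUnit_conjTranspose _).2 hu)]

theorem fieldStrength_eq_dz_add_dz_conjTranspose {n : Type*} [Fintype n] [DecidableEq n]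
    {Q A₁ A₂ : ℂ → Matrix n n ℂ} {z : ℂ} (hQ : DifferentiableAt ℝ Q z)
    (hA₁ : ∀ w, A₁ w = I • (Q w)ᴴ + -I • Q w) (hA₂ : ∀ w, A₂ w = I • (I • (Q w)ᴴ - -I • Q w)) :
    d1 A₂ z - d2 A₁ z + I • (A₁ z * A₂ z - A₂ z * A₁ z)
      = (-2 : ℂ) • (dz Q z + (dz Q z)ᴴ + (Q z * (Q z)ᴴ - (Q z)ᴴ * Q z)) := by
  have hQH : DifferentiableAt ℝ (fun w => (Q w)ᴴ) z := hQ.star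
  rw [fieldStrength_eq_wirtinger (hQH.fun_const_smul I) (hQ.fun_const_smul (-I)) hA₁ hA₂,
    dzbar_const_smul hQH, dzbar_conjTranspose, dz_const_smul hQ]
  simp only [smul_mul_assoc, mul_smul_comm, smul_smul]
  linear_combination (norm := module) I_mul_I • ((2 : ℂ) • (dz Q z)ᴴ + (2 : ℂ) • dz Q z
    - (2 : ℂ) • ((Q z)ᴴ * Q z) + (2 : ℂ) • (Q z * (Q z)ᴴ))

theorem ringInverse_mul_dzbar_dz_mul_ringInverse_mul {n : Type*} [Fintype n] [DecidableEq n]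
    {S Q : ℂ → Matrix n n ℂ} (hS : ContDiff ℝ 2 S) (hu : ∀ w, IsUnit (S w))
    (hQ : ∀ w, Q w = (S w)⁻¹ʳ * dzbar S w) (z : ℂ) :
    (S z)⁻¹ʳ * dzbar (fun w => dz (fun w => S w * (S w)ᴴ) w * (S w * (S w)ᴴ)⁻¹ʳ) z * S z
      = dz Q z + (dz Q z)ᴴ + (Q z * (Q z)ᴴ - (Q z)ᴴ * Q z) := by
  have hQ' : Q = fun w => (S w)⁻¹ʳ * dzbar S w := funext hQ
  set P : ℂ → Matrix n n ℂ := fun w => (S w)⁻¹ʳ * dz S w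
  have hSd : Differentiable ℝ S := hS.differentiable two_ne_zero
  have hQd : DifferentiableAt ℝ Q z := by
    rw [hQ']; exact hS.contDiffAt.differentiableAt_ringInverse_mul_dzbar (hu z)
  have hQH : DifferentiableAt ℝ (fun w => (Q w)ᴴ) z := hQd.star
  have hP : DifferentiableAt ℝ P z :=
    ((hSd z).inverse (hu z)).mul hS.contDiffAt.differentiableAt_dz
  have hΩ : (fun w => dz (fun w => S w * (S w)ᴴ) w * (S w * (S w)ᴴ)⁻¹ʳ)
      = fun w => S w * (P w + (Q w)ᴴ) * (S w)⁻¹ʳ := by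
    rw [hQ']; exact funext fun w => dz_mul_conjTranspose_mul_ringInverse (hSd w) (hu w)
  have hMC : dzbar P z - dz Q z = P z * Q z - Q z * P z := by
    rw [hQ']; exact hS.contDiffAt.wirtinger_maurerCartan (hu z)
  rw [hΩ, dzbar_conj (hSd z) (hu z) (hP.fun_add hQH), ← hQ z, dzbar_add hP hQH,
    dzbar_conjTranspose, eq_add_of_sub_eq hMC]
  noncomm_ring

/-- The moduli-matrix expression of the vortex magnetic field: with
`A_{z̄} = −i·S⁻¹∂_{z̄}S`, `A_z = (A_{z̄})ᴴ = i·∂_z(Sᴴ)·(Sᴴ)⁻¹`, `A₁ = A_z + A_{z̄}`,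
`A₂ = i(A_z − A_{z̄})` and `Ω = SSᴴ`, the field strength
`F₁₂ = ∂₁A₂ − ∂₂A₁ + i[A₁, A₂]` satisfies `F₁₂ = −2·S⁻¹·∂_{z̄}((∂_zΩ)·Ω⁻¹)·S`. -/
theorem field_strength_moduli_matrix (N : ℕ)
    (S : ℂ → Matrix (Fin N) (Fin N) ℂ)
    (hS : ContDiff ℝ 2 S) (hSinv : ∀ z : ℂ, IsUnit (S z))
    (Azbar Az A₁ A₂ F₁₂ Ω : ℂ → Matrix (Fin N) (Fin N) ℂ)
    (hAzbar : ∀ z, Azbar z = -Complex.I • ((S z)⁻¹ * dzbar S z))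
    (hAz : ∀ z, Az z = (Azbar z)ᴴ)
    (hA₁ : ∀ z, A₁ z = Az z + Azbar z)
    (hA₂ : ∀ z, A₂ z = Complex.I • (Az z - Azbar z))
    (hF : ∀ z, F₁₂ z = d1 A₂ z - d2 A₁ z + Complex.I • (A₁ z * A₂ z - A₂ z * A₁ z))
    (hΩ : ∀ z, Ω z = S z * (S z)ᴴ) :
    ∀ z : ℂ, F₁₂ z
      = (-2 : ℂ) • ((S z)⁻¹ * dzbar (fun w => dz Ω w * (Ω w)⁻¹) z * S z) := by
  intro z
  simp only [Matrix.nonsing_inv_eq_ringInverse] at hAzbar ⊢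
  obtain rfl : Ω = fun w => S w * (S w)ᴴ := funext hΩ
  set Q : ℂ → Matrix (Fin N) (Fin N) ℂ := fun w => (S w)⁻¹ʳ * dzbar S w
  have hQd : DifferentiableAt ℝ Q z :=
    hS.contDiffAt.differentiableAt_ringInverse_mul_dzbar (hSinv z)
  obtain rfl : Azbar = fun w => -I • Q w := funext hAzbar
  obtain rfl : Az = fun w => I • (Q w)ᴴ := funext fun w => by simp [hAz, conjTranspose_smul]
  rw [hF, fieldStrength_eq_dz_add_dz_conjTranspose hQd hA₁ hA₂,
    ringInverse_mul_dzbar_dz_mul_ringInverse_mul hS hSinv (fun w => rfl)]
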